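/- Let (X,d) be a metric space, m ≥ 1 a natural number, w > 0, r ∈ X, and x_1, …, x_m ∈ X pairwise distinct points with d(r, x_i) = w for all i and d(x_i, x_j) = 2w for all i ≠ j. Let N ∈ ℕ and p_0, p_1, …, p_N ∈ X be a sequence with p_0 = r such that every x_i appears among p_0, …, p_N, and for each i let t_i be the least index j with p_j = x_i. Then Σ_{i=1}^m ( Σ_{j=0}^{t_i − 1} d(p_j, p_{j+1}) ) ≥ m²·w. -/

import Mathlib

/-!
Order the leaves by the time they are first visited. Before reaching the `k`-th leaf the
trajectory has gone from the centre to the first leaf (length `w`) and then between `k - 1`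
pairs of distinct leaves (length `2w` each), so its cost is at least `(2k - 1)w`; summing over
`k = 1, …, m` gives `m²w`.
-/

open Finset

section

variable {X ι : Type*} [MetricSpace X]

noncomputable def pathLength (p : ℕ → X) (n : ℕ) : ℝ :=
  ∑ j ∈ range n, dist (p j) (p (j + 1))

lemma pathLength_add_dist_le (p : ℕ → X) {a b : ℕ} (hab : a ≤ b) :
    pathLength p a + dist (p a) (p b) ≤ pathLength p b := by
  rw [pathLength, pathLength, ← sum_range_add_sum_Ico _ hab]
  gcongr
  exact dist_le_Ico_sum_dist p hab

lemma two_mul_card_add_one_mul_le_pathLength [DecidableEq ι] {w : ℝ} {x : ι → X}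
    {p : ℕ → X} {t : ι → ℕ} (ht : Function.Injective t) (htp : ∀ i, p (t i) = x i)
    (hrx : ∀ i, dist (p 0) (x i) = w) (hxx : ∀ i j, i ≠ j → dist (x i) (x j) = 2 * w)
    (s : Finset ι) :
    ∀ a, (∀ i ∈ s, t i < t a) → (2 * #s + 1) * w ≤ pathLength p (t a) := by
  induction s using Finset.induction_on_max_value t with
  | empty =>
    intro a _
    simpa [pathLength, htp, hrx] using dist_le_range_sum_dist p (t a)
  | insert b s hb hmax ih =>
    intro a hlt
    have hbs : ∀ i ∈ s, t i < t b := fun i hi =>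
      (hmax i hi).lt_of_ne (ht.ne (ne_of_mem_of_not_mem hi hb))
    have hba : t b < t a := hlt b (mem_insert_self b s)
    have hleg : dist (p (t b)) (p (t a)) = 2 * w := by
      rw [htp, htp]
      exact hxx b a (ne_of_apply_ne t hba.ne)
    have := pathLength_add_dist_le p hba.le
    rw [card_insert_of_notMem hb]
    push_cast
    linarith [ih b hbs]

lemma card_sq_mul_le_sum_pathLength [DecidableEq ι] {w : ℝ} {x : ι → X}
    {p : ℕ → X} {t : ι → ℕ} (ht : Function.Injective t) (htp : ∀ i, p (t i) = x i)
    (hrx : ∀ i, dist (p 0) (x i) = w) (hxx : ∀ i j, i ≠ j → dist (x i) (x j) = 2 * w)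
    (s : Finset ι) :
    (#s : ℝ) ^ 2 * w ≤ ∑ i ∈ s, pathLength p (t i) := by
  induction s using Finset.induction_on_max_value t with
  | empty => simp
  | insert a s ha hmax ih =>
    have hlast := two_mul_card_add_one_mul_le_pathLength ht htp hrx hxx s a fun i hi =>
      (hmax i hi).lt_of_ne (ht.ne (ne_of_mem_of_not_mem hi ha))
    rw [card_insert_of_notMem ha, sum_insert ha]
    push_cast
    linarith
end

theorem star_traversal_randomized_lower_bound_general
    {X : Type*} [MetricSpace X] (m : ℕ) (w : ℝ)
    (r : X) (x : Fin m → X) (hx : Function.Injective x)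
    (hrx : ∀ i : Fin m, dist r (x i) = w)
    (hxx : ∀ i j : Fin m, i ≠ j → dist (x i) (x j) = 2 * w)
    (N : ℕ) (p : ℕ → X) (hp0 : p 0 = r)
    (t : Fin m → ℕ)
    (ht : ∀ i : Fin m, t i ≤ N ∧ p (t i) = x i ∧ ∀ j < t i, p j ≠ x i) :
    (m : ℝ) ^ 2 * w ≤ ∑ i, ∑ j ∈ Finset.range (t i), dist (p j) (p (j + 1)) := by
  have htp : ∀ i, p (t i) = x i := fun i => (ht i).2.1
  have ht_inj : Function.Injective t := fun i j hij => hx (by rw [← htp, ← htp, hij])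
  subst hp0
  simpa [pathLength] using card_sq_mul_le_sum_pathLength ht_inj htp hrx hxx univ

/-- Randomized star lower bound (core of the Yao-principle argument): summing, over the
leaves of a metric star, the cost incurred by a trajectory until the first visit to each
leaf, gives at least `m²·w`. -/
theorem star_traversal_randomized_lower_bound
    {X : Type*} [MetricSpace X] (m : ℕ) (hm : 1 ≤ m) (w : ℝ) (hw : 0 < w)
    (r : X) (x : Fin m → X) (hx : Function.Injective x)
    (hrx : ∀ i : Fin m, dist r (x i) = w)
    (hxx : ∀ i j : Fin m, i ≠ j → dist (x i) (x j) = 2 * w)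
    (N : ℕ) (p : ℕ → X) (hp0 : p 0 = r)
    (t : Fin m → ℕ)
    (ht : ∀ i : Fin m, t i ≤ N ∧ p (t i) = x i ∧ ∀ j < t i, p j ≠ x i) :
    (m : ℝ) ^ 2 * w ≤ ∑ i, ∑ j ∈ Finset.range (t i), dist (p j) (p (j + 1)) :=
  star_traversal_randomized_lower_bound_general m w r x hx hrx hxx N p hp0 t ht
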